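/- Suppose I contains a regular (non-zero-divisor) element of R. Then R ⋈ I is coherent if and only if R is coherent and I is a finitely generated ideal of R. In particular, for m a regular element of I, the annihilator of (m, 0) in R ⋈ I equals O₁ = {(0, i) : i ∈ I}. -/

import Mathlib

/-- The amalgamated duplication of a ring `R` along an ideal `I`, as a subring of `R × R`. -/
def dup (R : Type*) [CommRing R] (I : Ideal R) : Subring (R × R) where
  carrier := {x | x.2 - x.1 ∈ I}
  zero_mem' := by simp
  one_mem' := by simp
  add_mem' := by
    intro a b ha hb
    show a.2 + b.2 - (a.1 + b.1) ∈ I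
    have h : a.2 + b.2 - (a.1 + b.1) = (a.2 - a.1) + (b.2 - b.1) := by ring
    rw [h]; exact I.add_mem ha hb
  neg_mem' := by
    intro a ha
    show -a.2 - -a.1 ∈ I
    have h : -a.2 - -a.1 = -(a.2 - a.1) := by ring
    rw [h]; exact I.neg_mem ha
  mul_mem' := by
    intro a b ha hb
    show a.2 * b.2 - a.1 * b.1 ∈ I
    have h : a.2 * b.2 - a.1 * b.1 = a.2 * (b.2 - b.1) + b.1 * (a.2 - a.1) := by ring
    rw [h]; exact I.add_mem (I.mul_mem_left _ hb) (I.mul_mem_left _ ha)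

/-- The diagonal embedding `R → R ⋈ I`. -/
def diag (R : Type*) [CommRing R] (I : Ideal R) : R →+* dup R I where
  toFun r := ⟨(r, r), show r - r ∈ I by simp⟩
  map_one' := rfl
  map_mul' _ _ := rfl
  map_zero' := rfl
  map_add' _ _ := rfl

/-- A commutative ring is *coherent* if every finitely generated ideal is finitely
presented. -/
def IsCoherentRing (R : Type*) [CommRing R] : Prop :=
  ∀ J : Ideal R, J.FG → Module.FinitePresentation R J

/-!
`R` is a retract of `R ⋈ I` (diagonal map, first projection), and coherence descends to
retracts: the relations among finitely many elements of `R` are exactly the first projections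
of the relations among their diagonal images. Conversely, if `I` is finitely generated then
`R ⋈ I ≅ R × I` is a finite `R`-module sitting inside `R²`; over a coherent ring every finite
submodule of `R²` is finitely presented, and finite presentation over `R` lifts to the finite
`R`-algebra `R ⋈ I`. Finally, for a regular `m ∈ I` the annihilator of `(m, 0)` is
`O₁ = 0 × I`; it is finitely generated when `R ⋈ I` is coherent, and its second projection
is `I`.
-/

open Function Finsupp LinearMap Submodule

lemma Module.FinitePresentation.of_restrictScalars (R : Type*) {S M : Type*} [CommRing R]
    [CommRing S] [Algebra R S] [Module.Finite R S] [AddCommGroup M] [Module R M] [Module S M]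
    [IsScalarTower R S M] [Module.FinitePresentation R M] : Module.FinitePresentation S M := by
  have : Module.Finite S M := .of_restrictScalars_finite R S M
  obtain ⟨n, π, hπ⟩ := Module.Finite.exists_fin' S M
  exact Module.finitePresentation_of_free_of_surjective π hπ
    (.of_restrictScalars R (Module.FinitePresentation.fg_ker (π.restrictScalars R) hπ))

namespace IsCoherentRing

variable {R : Type*} [CommRing R]

lemma finitePresentation_of_injective (h : IsCoherentRing R) {M : Type*} [AddCommGroup M]
    [Module R M] [Module.Finite R M] {f : M →ₗ[R] R} (hf : Injective f) :
    Module.FinitePresentation R M :=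
  have := h _ (fg_range f)
  .of_equiv (LinearEquiv.ofInjective f hf).symm

lemma finitePresentation_of_injective_prod (h : IsCoherentRing R) {M : Type*} [AddCommGroup M]
    [Module R M] [Module.Finite R M] {f : M →ₗ[R] R × R} (hf : Injective f) :
    Module.FinitePresentation R M := by
  set g := snd R R R ∘ₗ f
  have : Module.FinitePresentation R (range g) := h _ (fg_range g)
  have : Module.Finite R (ker g.rangeRestrict) :=
    .of_fg (Module.FinitePresentation.fg_ker _ g.surjective_rangeRestrict)
  have : Module.FinitePresentation R (ker g.rangeRestrict) := by
    refine h.finitePresentation_of_injective (f := fst R R R ∘ₗ f ∘ₗ (ker _).subtype) ?_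
    rintro ⟨x, hx⟩ ⟨y, hy⟩ hxy
    rw [ker_rangeRestrict, mem_ker] at hx hy
    exact Subtype.ext (hf (Prod.ext hxy (hx.trans hy.symm)))
  exact Module.finitePresentation_of_ker g.rangeRestrict g.surjective_rangeRestrict

lemma of_finite_of_injective_prod {S : Type*} [CommRing S] [Algebra R S] [Module.Finite R S]
    (h : IsCoherentRing R) {f : S →ₗ[R] R × R} (hf : Injective f) : IsCoherentRing S := by
  intro J hJ
  have : Module.Finite S J := .of_fg hJ
  have : Module.Finite R J := .trans S J
  have : Module.FinitePresentation R J := h.finitePresentation_of_injective_prod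
    (f := f ∘ₗ J.subtype.restrictScalars R) (hf.comp Subtype.val_injective)
  exact .of_restrictScalars R

lemma fg_ker (h : IsCoherentRing R) {M : Type*} [AddCommGroup M] [Module R M]
    [Module.Finite R M] (l : M →ₗ[R] R) : (ker l).FG := by
  have : Module.FinitePresentation R (range l) := h _ (fg_range l)
  simpa only [ker_rangeRestrict] using
    Module.FinitePresentation.fg_ker _ l.surjective_rangeRestrict

lemma of_fg_ker_linearCombination
    (h : ∀ t : Finset R, (ker (linearCombination R ((↑) : t → R))).FG) :
    IsCoherentRing R := by
  rintro J ⟨t, rfl⟩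
  have hrange : range (linearCombination R ((↑) : t → R)) = Ideal.span t := by
    rw [range_linearCombination, Subtype.range_coe]
  rw [← hrange]
  exact Module.finitePresentation_of_free_of_surjective _
    (linearCombination R _).surjective_rangeRestrict (by rw [ker_rangeRestrict]; exact h t)

lemma of_retraction {S : Type*} [CommRing S] (f : R →+* S) (g : S →+* R)
    (hgf : ∀ r, g (f r) = r) (h : IsCoherentRing S) : IsCoherentRing R := by
  have : RingHomSurjective g := ⟨fun r => ⟨f r, hgf r⟩⟩
  refine of_fg_ker_linearCombination fun t => ?_
  set φ := linearCombination R ((↑) : t → R)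
  set ψ := linearCombination S fun i : t => f i
  set L := mapRange.linearMap (α := t) f.toSemilinearMap
  set P := mapRange.linearMap (α := t) g.toSemilinearMap
  have hψL : ∀ x, ψ (L x) = f (φ x) := fun x => by
    simp [ψ, L, φ, linearCombination_apply, sum_mapRange_index, map_finsuppSum]
  have hφP : ∀ x, φ (P x) = g (ψ x) := fun x => by
    simp [ψ, P, φ, linearCombination_apply, sum_mapRange_index, map_finsuppSum, hgf]
  have hPL : ∀ x, P (L x) = x := fun x => by
    ext
    simp [P, L, hgf]
  have hker : ker φ = (ker ψ).map P := by
    ext x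
    constructor
    · intro hx
      exact ⟨L x, by rw [SetLike.mem_coe, mem_ker, hψL, mem_ker.mp hx, map_zero], hPL x⟩
    · rintro ⟨y, hy, rfl⟩
      rw [mem_ker, hφP, mem_ker.mp hy, map_zero]
  exact hker ▸ (h.fg_ker ψ).map P

end IsCoherentRing

namespace dup

variable (R : Type*) [CommRing R] (I : Ideal R)

instance : Algebra R (dup R I) := (diag R I).toAlgebra

@[simp]
lemma coe_algebraMap (r : R) : (algebraMap R (dup R I) r : R × R) = (r, r) := rfl

def toProd : dup R I →ₗ[R] R × R where
  toFun x := x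
  map_add' _ _ := rfl
  map_smul' _ _ := rfl

lemma toProd_injective : Injective (toProd R I) := Subtype.val_injective

def ofProd : R × I →ₗ[R] dup R I where
  toFun p := ⟨(p.1, p.1 + p.2), show p.1 + p.2 - p.1 ∈ I by simp⟩
  map_add' _ _ := by ext <;> simp [add_add_add_comm]
  map_smul' _ _ := by ext <;> simp [Algebra.smul_def, mul_add]

lemma ofProd_surjective : Surjective (ofProd R I) :=
  fun x => ⟨(x.1.1, ⟨x.1.2 - x.1.1, x.2⟩), by ext <;> simp [ofProd]⟩

lemma finite_of_fg (hI : I.FG) : Module.Finite R (dup R I) :=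
  have : Module.Finite R I := .of_fg hI
  .of_surjective _ (ofProd_surjective R I)

variable {R I}

lemma mul_mk_eq_zero_iff {m : R} (hm : m ∈ nonZeroDivisors R)
    (hmem : ((m, 0) : R × R) ∈ dup R I) (x : dup R I) :
    x * ⟨(m, 0), hmem⟩ = 0 ↔ (x : R × R).1 = 0 ∧ (x : R × R).2 ∈ I := by
  have hx : (x : R × R).2 - (x : R × R).1 ∈ I := x.2
  rw [Subtype.ext_iff, Prod.ext_iff]
  simp only [Subring.coe_mul, Prod.fst_mul, Prod.snd_mul, mul_zero, ZeroMemClass.coe_zero,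
    Prod.fst_zero, Prod.snd_zero, and_true, mul_right_mem_nonZeroDivisors_eq_zero_iff hm]
  exact ⟨fun h1 => ⟨h1, by simpa [h1] using hx⟩, And.left⟩

lemma fg_of_isCoherentRing (h : IsCoherentRing (dup R I)) {m : R} (hmI : m ∈ I)
    (hm : m ∈ nonZeroDivisors R) : I.FG := by
  have hmem : ((m, 0) : R × R) ∈ dup R I := show 0 - m ∈ I by simpa using I.neg_mem hmI
  set O₁ := Ideal.torsionOf (dup R I) (dup R I) ⟨(m, 0), hmem⟩
  have hO₁ : ∀ x, x ∈ O₁ ↔ (x : R × R).1 = 0 ∧ (x : R × R).2 ∈ I := fun x =>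
    (Ideal.mem_torsionOf_iff _ _).trans (mul_mk_eq_zero_iff hm hmem x)
  have hI : I = O₁.map ((RingHom.snd R R).comp (dup R I).subtype) := by
    refine le_antisymm (fun i hi => ?_)
      (Ideal.map_le_iff_le_comap.mpr fun x hx => ((hO₁ x).mp hx).2)
    have hmem' : ((0, i) : R × R) ∈ dup R I := show i - 0 ∈ I by simpa using hi
    exact Ideal.mem_map_of_mem _ ((hO₁ ⟨_, hmem'⟩).mpr ⟨rfl, hi⟩)
  have hO₁_fg : O₁.FG := h.fg_ker (toSpanSingleton _ _ _)
  exact hI ▸ hO₁_fg.map _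

end dup

/-- if `I` contains a regular element, then `R ⋈ I` is coherent iff `R` is
coherent and `I` is finitely generated; moreover for a regular element `m ∈ I`, the
annihilator of `(m, 0)` in `R ⋈ I` is `O₁ = {(0, i) : i ∈ I}`. -/
theorem dup_coherent_iff_of_regular (R : Type*) [CommRing R] (I : Ideal R)
    (hreg : ∃ m ∈ I, m ∈ nonZeroDivisors R) :
    (IsCoherentRing (dup R I) ↔ IsCoherentRing R ∧ I.FG) ∧
    ∀ m (hm : m ∈ I), m ∈ nonZeroDivisors R →
      ∀ x : dup R I,
        x * ⟨(m, 0), show (0 : R) - m ∈ I by simpa using I.neg_mem hm⟩ = 0 ↔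
          ((x : R × R).1 = 0 ∧ (x : R × R).2 ∈ I) := by
  obtain ⟨m, hmI, hm⟩ := hreg
  refine ⟨⟨fun h => ⟨?_, dup.fg_of_isCoherentRing h hmI hm⟩, fun ⟨hR, hI⟩ => ?_⟩,
    fun m _ hm => dup.mul_mk_eq_zero_iff hm _⟩
  · exact h.of_retraction (diag R I) ((RingHom.fst R R).comp (dup R I).subtype) fun _ => rfl
  · have := dup.finite_of_fg R I hI
    exact hR.of_finite_of_injective_prod (dup.toProd_injective R I)
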